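/- Let G = (V,E) be a finite undirected graph, let γ > 0, and let P be a partition of V. If a community C ∈ P is uniformly γ-dense, then C is subpartition γ-dense. -/
import Mathlib


open Finset

variable {V : Type*}

/-- `eBetween G S T` is the number of adjacent pairs `(u, v)` with `u ∈ S` and `v ∈ T`.
For disjoint `S` and `T` this is the number of edges between `S` and `T`. -/
noncomputable def eBetween (G : SimpleGraph V) [DecidableRel G.Adj] (S T : Finset V) : ℝ :=
  ∑ u ∈ S, ∑ v ∈ T, if G.Adj u v then (1 : ℝ) else 0

/-- `P` is a partition of `V` into nonempty communities. -/
def IsPartition [Fintype V] (P : Finset (Finset V)) : Prop :=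
  (∀ C ∈ P, C.Nonempty) ∧ ∀ v : V, ∃! C, C ∈ P ∧ v ∈ C

/-- A nonempty set `S ⊆ C` is subpartition `γ`-dense (relative to the community `C`) if
(i) `E(S, C−S) ≥ γ·|S|·|C−S|` and (ii) `|S| = 1`, or `S` can be partitioned into two nonempty
sets `R` and `T` such that `E(R,T) ≥ γ·|R|·|T|` and both `R` and `T` are subpartition
`γ`-dense. -/
inductive SubpartitionDense [DecidableEq V] (G : SimpleGraph V) [DecidableRel G.Adj]
    (γ : ℝ) (C : Finset V) : Finset V → Prop
  | single (v : V) : v ∈ C →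
      γ * (({v} : Finset V).card : ℝ) * (((C \ {v}).card : ℝ)) ≤
        eBetween G ({v} : Finset V) (C \ {v}) →
      SubpartitionDense G γ C ({v} : Finset V)
  | split (R T : Finset V) : R.Nonempty → T.Nonempty → Disjoint R T →
      γ * (((R ∪ T).card : ℝ)) * (((C \ (R ∪ T)).card : ℝ)) ≤
        eBetween G (R ∪ T) (C \ (R ∪ T)) →
      γ * (R.card : ℝ) * (T.card : ℝ) ≤ eBetween G R T →
      SubpartitionDense G γ C R → SubpartitionDense G γ C T →
      SubpartitionDense G γ C (R ∪ T)

lemma eBetween_comm (G : SimpleGraph V) [DecidableRel G.Adj] (A B : Finset V) :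
    eBetween G A B = eBetween G B A := by
  unfold eBetween
  rw [Finset.sum_comm]
  exact Finset.sum_congr rfl fun v _ => Finset.sum_congr rfl fun u _ => by
    simp [G.adj_comm]

lemma eBetween_union_left (G : SimpleGraph V) [DecidableRel G.Adj] {A B : Finset V}
    (T : Finset V) (h : Disjoint A B) [DecidableEq V] :
    eBetween G (A ∪ B) T = eBetween G A T + eBetween G B T := by
  unfold eBetween; rw [Finset.sum_union h]

lemma eBetween_union_right (G : SimpleGraph V) [DecidableRel G.Adj] (A : Finset V)
    {T₁ T₂ : Finset V} (h : Disjoint T₁ T₂) [DecidableEq V] :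
    eBetween G A (T₁ ∪ T₂) = eBetween G A T₁ + eBetween G A T₂ := by
  unfold eBetween
  rw [← Finset.sum_add_distrib]
  exact Finset.sum_congr rfl fun u _ => Finset.sum_union h

lemma key_lemma [Fintype V] [DecidableEq V] (G : SimpleGraph V) [DecidableRel G.Adj]
    (γ : ℝ) (hγ : 0 < γ) (C : Finset V)
    (hdense : ∀ S ⊆ C, γ * (S.card : ℝ) * (((C \ S).card : ℝ)) ≤ eBetween G S (C \ S)) :
    ∀ (n : ℕ) (S : Finset V), S.card ≤ n → S.Nonempty → S ⊆ C →
      (∀ X ⊆ S, γ * (X.card : ℝ) * (((S \ X).card : ℝ)) ≤ eBetween G X (S \ X)) →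
      SubpartitionDense G γ C S := by
  intro n
  induction n with
  | zero =>
    intro S hcard hne _ _
    simp [Nat.le_zero, Finset.card_eq_zero] at hcard
    simp [hcard] at hne
  | succ n ih =>
    intro S hcard hne hSC hind
    rcases eq_or_lt_of_le (Finset.one_le_card.mpr hne) with h1 | h2
    · -- singleton case
      obtain ⟨v, hv⟩ := Finset.card_eq_one.mp h1.symm
      subst hv
      refine SubpartitionDense.single v (hSC (Finset.mem_singleton_self v)) ?_
      exact hdense {v} hSC
    · -- |S| ≥ 2 : choose minimizing bipartition
      set 𝒮 : Finset (Finset V) :=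
        S.powerset.filter (fun R => R.Nonempty ∧ R ≠ S) with h𝒮def
      have h𝒮ne : 𝒮.Nonempty := by
        obtain ⟨v, hv⟩ := hne
        refine ⟨{v}, ?_⟩
        simp only [h𝒮def, Finset.mem_filter, Finset.mem_powerset]
        refine ⟨Finset.singleton_subset_iff.mpr hv, Finset.singleton_nonempty v, ?_⟩
        intro h
        rw [← h] at h2
        simp at h2
      obtain ⟨R, hR𝒮, hRmin⟩ := Finset.exists_min_image 𝒮
        (fun R => eBetween G R (S \ R) - γ * (R.card : ℝ) * (((S \ R).card : ℝ))) h𝒮ne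
      simp only [h𝒮def, Finset.mem_filter, Finset.mem_powerset] at hR𝒮
      obtain ⟨hRS, hRne, hRneS⟩ := hR𝒮
      set T : Finset V := S \ R with hTdef
      have hTne : T.Nonempty := by
        rw [hTdef, Finset.sdiff_nonempty]
        intro h
        exact hRneS (Finset.Subset.antisymm hRS h)
      have hdisj : Disjoint R T := Finset.disjoint_sdiff
      have hunion : R ∪ T = S := Finset.union_sdiff_of_subset hRS
      have hTS : T ⊆ S := Finset.sdiff_subset
      have hcardT : (T.card : ℝ) = (S.card : ℝ) - (R.card : ℝ) :=
        Finset.cast_card_sdiff hRS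
      -- R is induced-uniformly-dense
      have hRdense : ∀ X ⊆ R, γ * (X.card : ℝ) * (((R \ X).card : ℝ)) ≤
          eBetween G X (R \ X) := by
        intro X hXR
        by_contra hlt
        push_neg at hlt
        have hXne : X.Nonempty := by
          rcases X.eq_empty_or_nonempty with h | h
          · subst h; simp [eBetween] at hlt
          · exact h
        have hXRne : (R \ X).Nonempty := by
          rw [Finset.sdiff_nonempty]
          intro h
          have hXeq : X = R := Finset.Subset.antisymm hXR h
          subst hXeq
          simp [eBetween] at hlt
        have hXS : X ⊆ S := hXR.trans hRS
        have hR'𝒮 : (R \ X) ∈ 𝒮 := by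
          simp only [h𝒮def, Finset.mem_filter, Finset.mem_powerset]
          refine ⟨Finset.sdiff_subset.trans hRS, hXRne, ?_⟩
          intro h
          obtain ⟨t, ht⟩ := hTne
          have htS : t ∈ S := hTS ht
          have htR : t ∉ R := (Finset.mem_sdiff.mp ht).2
          rw [← h] at htS
          exact htR (Finset.mem_sdiff.mp htS).1
        -- set identities
        have hdXT : Disjoint X T := Finset.disjoint_of_subset_left hXR hdisj
        have hdRXT : Disjoint (R \ X) T := Finset.disjoint_of_subset_left Finset.sdiff_subset hdisj
        have hdXRX : Disjoint X (R \ X) := Finset.disjoint_sdiff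
        have hSX : S \ X = (R \ X) ∪ T := by
          rw [← hunion, Finset.union_sdiff_distrib, Finset.sdiff_eq_self_of_disjoint hdXT.symm]
        have hSRX : S \ (R \ X) = X ∪ T := by
          ext a
          simp only [Finset.mem_sdiff, Finset.mem_union, hTdef]
          constructor
          · rintro ⟨haS, h⟩
            by_cases haR : a ∈ R
            · left; by_contra haX; exact h ⟨haR, haX⟩
            · right; exact ⟨haS, haR⟩
          · rintro (haX | ⟨haS, haR⟩)
            · exact ⟨hXS haX, fun h => h.2 haX⟩
            · exact ⟨haS, fun h => haR h.1⟩
        -- edge identities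
        have he1 : eBetween G X (S \ X) = eBetween G X (R \ X) + eBetween G X T := by
          rw [hSX, eBetween_union_right G X hdRXT]
        have he2 : eBetween G (R \ X) (S \ (R \ X)) =
            eBetween G X (R \ X) + eBetween G (R \ X) T := by
          rw [hSRX, eBetween_union_right G _ hdXT, eBetween_comm G _ X]
        have he3 : eBetween G R T = eBetween G X T + eBetween G (R \ X) T := by
          conv_lhs => rw [← Finset.union_sdiff_of_subset hXR]
          rw [eBetween_union_left G T hdXRX]
        -- cards
        have hcX : ((R \ X).card : ℝ) = (R.card : ℝ) - (X.card : ℝ) :=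
          Finset.cast_card_sdiff hXR
        have hcSX : ((S \ X).card : ℝ) = (S.card : ℝ) - (X.card : ℝ) :=
          Finset.cast_card_sdiff hXS
        have hcSRX : ((S \ (R \ X)).card : ℝ) = (S.card : ℝ) - ((R.card : ℝ) - (X.card : ℝ)) := by
          rw [Finset.cast_card_sdiff (Finset.sdiff_subset.trans hRS), hcX]
        -- density of X in S
        have hdX := hind X hXS
        -- minimality
        have hmin := hRmin (R \ X) hR'𝒮
        have hcS : ((S.card : ℝ)) = (R.card : ℝ) + (T.card : ℝ) := by
          rw [hcardT]; ring
        rw [he1, hcSX, hcS] at hdX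
        rw [he2, hcSRX, he3, hcX, hcS] at hmin
        rw [hcX] at hlt
        have hx : (0:ℝ) < X.card := by exact_mod_cast Finset.card_pos.mpr hXne
        nlinarith [hlt, hdX, hmin, mul_pos hγ hx]
      -- T is induced-uniformly-dense
      have hTdense : ∀ X ⊆ T, γ * (X.card : ℝ) * (((T \ X).card : ℝ)) ≤
          eBetween G X (T \ X) := by
        intro X hXT
        by_contra hlt
        push_neg at hlt
        have hXne : X.Nonempty := by
          rcases X.eq_empty_or_nonempty with h | h
          · subst h; simp [eBetween] at hlt
          · exact h
        have hXTne : (T \ X).Nonempty := by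
          rw [Finset.sdiff_nonempty]
          intro h
          have hXeq : X = T := Finset.Subset.antisymm hXT h
          subst hXeq
          simp [eBetween] at hlt
        have hXS : X ⊆ S := hXT.trans hTS
        have hdRX : Disjoint R X := Finset.disjoint_of_subset_right hXT hdisj
        have hdRTX : Disjoint R (T \ X) := Finset.disjoint_of_subset_right Finset.sdiff_subset hdisj
        have hdXTX : Disjoint X (T \ X) := Finset.disjoint_sdiff
        have hR'𝒮 : (R ∪ X) ∈ 𝒮 := by
          simp only [h𝒮def, Finset.mem_filter, Finset.mem_powerset]
          refine ⟨Finset.union_subset hRS hXS, hRne.mono Finset.subset_union_left, ?_⟩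
          intro h
          obtain ⟨t, ht⟩ := hXTne
          have htS : t ∈ S := (Finset.sdiff_subset.trans hTS) ht
          rw [← h] at htS
          rcases Finset.mem_union.mp htS with h' | h'
          · exact (Finset.mem_sdiff.mp ((Finset.mem_sdiff.mp ht).1)).2 h'
          · exact (Finset.mem_sdiff.mp ht).2 h'
        -- set identities
        have hSX : S \ X = R ∪ (T \ X) := by
          rw [← hunion, Finset.union_sdiff_distrib, Finset.sdiff_eq_self_of_disjoint hdRX]
        have hSRX : S \ (R ∪ X) = T \ X := by
          ext a
          simp only [Finset.mem_sdiff, Finset.mem_union, hTdef]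
          tauto
        -- edge identities
        have he1 : eBetween G X (S \ X) = eBetween G X R + eBetween G X (T \ X) := by
          rw [hSX, eBetween_union_right G X hdRTX]
        have he2 : eBetween G (R ∪ X) (S \ (R ∪ X)) =
            eBetween G R (T \ X) + eBetween G X (T \ X) := by
          rw [hSRX, eBetween_union_left G _ hdRX]
        have he3 : eBetween G R T = eBetween G R X + eBetween G R (T \ X) := by
          conv_lhs => rw [← Finset.union_sdiff_of_subset hXT]
          rw [eBetween_union_right G R hdXTX]
        have heRX : eBetween G X R = eBetween G R X := eBetween_comm G X R
        -- cards
        have hcX : ((T \ X).card : ℝ) = (T.card : ℝ) - (X.card : ℝ) :=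
          Finset.cast_card_sdiff hXT
        have hcSX : ((S \ X).card : ℝ) = (S.card : ℝ) - (X.card : ℝ) :=
          Finset.cast_card_sdiff hXS
        have hcSRX : ((S \ (R ∪ X)).card : ℝ) = (T.card : ℝ) - (X.card : ℝ) := by
          rw [hSRX, hcX]
        have hcRX : (((R ∪ X)).card : ℝ) = (R.card : ℝ) + (X.card : ℝ) := by
          rw [Finset.card_union_of_disjoint hdRX]; push_cast; ring
        have hdX := hind X hXS
        have hmin := hRmin (R ∪ X) hR'𝒮
        have hcS : ((S.card : ℝ)) = (R.card : ℝ) + (T.card : ℝ) := by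
          rw [hcardT]; ring
        rw [he1, hcSX, heRX, hcS] at hdX
        rw [he2, hcSRX, hcRX, he3] at hmin
        rw [hcX] at hlt
        have hx : (0:ℝ) < X.card := by exact_mod_cast Finset.card_pos.mpr hXne
        nlinarith [hlt, hdX, hmin, mul_pos hγ hx]
      -- recursive calls
      have hRcard : R.card ≤ n := by
        have : R.card < S.card := Finset.card_lt_card (Finset.ssubset_iff_subset_ne.mpr ⟨hRS, hRneS⟩)
        omega
      have hTcard : T.card ≤ n := by
        have h' : T ≠ S := by
          intro h
          obtain ⟨r, hr⟩ := hRne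
          have : r ∈ T := h ▸ hRS hr
          exact (Finset.mem_sdiff.mp this).2 hr
        have : T.card < S.card := Finset.card_lt_card (Finset.ssubset_iff_subset_ne.mpr ⟨hTS, h'⟩)
        omega
      have dR := ih R hRcard hRne (hRS.trans hSC) hRdense
      have dT := ih T hTcard hTne (hTS.trans hSC) hTdense
      have hsplit := SubpartitionDense.split (G := G) (γ := γ) (C := C) R T hRne hTne hdisj
        (by rw [hunion]; exact hdense S hSC)
        (hind R hRS) dR dT
      rwa [hunion] at hsplit

/-- **Theorem.** A uniformly `γ`-dense community is subpartition `γ`-dense. -/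
theorem uniformly_dense_implies_subpartition_dense
    [Fintype V] [DecidableEq V] (G : SimpleGraph V) [DecidableRel G.Adj]
    (γ : ℝ) (hγ : 0 < γ)
    (P : Finset (Finset V)) (hP : IsPartition P) (C : Finset V) (hC : C ∈ P)
    (hdense : ∀ S ⊆ C,
      γ * (S.card : ℝ) * (((C \ S).card : ℝ)) ≤ eBetween G S (C \ S)) :
    SubpartitionDense G γ C C :=
  key_lemma G γ hγ C hdense C.card C le_rfl (hP.1 C hC) Finset.Subset.rfl hdense
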